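/- arXiv:2304.07971 — 6 statements merged into one kernel-verified Lean document; each statement's English description precedes it below -/
import Mathlib

section
/- Under the signal-model setup, for any user u and any two item indices i, j: d²_W(p_u, q_i) − d²_W(p_u, q_j) = ω d_i^{−2t}(d_i^{2t} − 2 R_{ui}) − ω d_j^{−2t}(d_j^{2t} − 2 R_{uj}) − 2 p_u^T H (q_i − q_j). -/
open Matrix Finset

theorem signal_model_distance_residual
    (m n : ℕ) (R : Matrix (Fin m) (Fin n) ℝ)
    (hR01 : ∀ u i, R u i = 0 ∨ R u i = 1)
    (d : Fin n → ℝ) (hd : d = fun i => ∑ u, R u i) (hdpos : ∀ i, 0 < d i)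
    (t : ℝ)
    (H : Matrix (Fin n) (Fin n) ℝ) (hHsymm : H.IsSymm) (hHhollow : ∀ i, H i i = 0)
    (ω : ℝ) (hω : 0 < ω)
    (W : Matrix (Fin n) (Fin n) ℝ)
    (hW : W = H + ω • Matrix.diagonal fun i => d i ^ (-(2 * t)))
    (p : Fin m → Fin n → ℝ) (hp : p = fun u k => d k ^ (-t) * R u k)
    (q : Fin n → Fin n → ℝ) (hq : q = fun i => d i ^ t • (Pi.single i 1 : Fin n → ℝ))
    (dsq : (Fin n → ℝ) → (Fin n → ℝ) → ℝ)
    (hdsq : dsq = fun x z => (x - z) ⬝ᵥ W.mulVec (x - z))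
    (y : Fin m → Fin n → ℝ) (hy : y = fun u i => p u ⬝ᵥ H.mulVec (q i))
    (u : Fin m) (i j : Fin n)
 :
    dsq (p u) (q i) - dsq (p u) (q j) =
      ω * d i ^ (-(2 * t)) * (d i ^ (2 * t) - 2 * R u i)
        - ω * d j ^ (-(2 * t)) * (d j ^ (2 * t) - 2 * R u j)
        - 2 * (p u ⬝ᵥ H.mulVec (q i - q j)) := by
  have hWs : Wᵀ = W := by
    rw [hW, Matrix.transpose_add, Matrix.transpose_smul, Matrix.diagonal_transpose, hHsymm]
  have hsym : ∀ x z : Fin n → ℝ, z ⬝ᵥ W *ᵥ x = x ⬝ᵥ W *ᵥ z := by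
    intro x z
    rw [Matrix.dotProduct_mulVec, ← Matrix.mulVec_transpose, hWs, dotProduct_comm]
  have expand : ∀ x z : Fin n → ℝ,
      (x - z) ⬝ᵥ W *ᵥ (x - z)
        = x ⬝ᵥ W *ᵥ x - x ⬝ᵥ W *ᵥ z - z ⬝ᵥ W *ᵥ x + z ⬝ᵥ W *ᵥ z := by
    intro x z
    simp [Matrix.mulVec_sub, dotProduct_sub, sub_dotProduct]
    ring
  have hpow1 : ∀ k : Fin n, d k ^ t * d k ^ t = d k ^ (2 * t) := fun k => by
    rw [← Real.rpow_add (hdpos k), two_mul]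
  have hpow2 : ∀ k : Fin n, d k ^ t * d k ^ (-t) = 1 := fun k => by
    rw [← Real.rpow_add (hdpos k)]; simp
  have hA : ∀ k : Fin n, (q k) ⬝ᵥ W *ᵥ (q k) = ω * d k ^ (-(2 * t)) * d k ^ (2 * t) := by
    intro k
    rw [hq]
    simp [Matrix.mulVec_smul, Matrix.mulVec_single, smul_dotProduct, dotProduct_smul,
      dotProduct_single, single_dotProduct, hW, Matrix.add_apply, Matrix.smul_apply,
      Matrix.diagonal_apply_eq, hHhollow k, smul_eq_mul]
    rw [show d k ^ t * (d k ^ t * (ω * d k ^ (-(2*t)))) =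
        (d k ^ t * d k ^ t) * (ω * d k ^ (-(2*t))) by ring, hpow1 k]
    ring
  have hB : ∀ k : Fin n,
      (p u) ⬝ᵥ W *ᵥ (q k) = (p u) ⬝ᵥ H *ᵥ (q k) + ω * (d k ^ (-(2 * t)) * R u k) := by
    intro k
    rw [hW, Matrix.add_mulVec, dotProduct_add]
    congr 1
    rw [hq, Matrix.smul_mulVec, Matrix.mulVec_smul, Matrix.diagonal_mulVec_single,
      dotProduct_smul, dotProduct_smul, dotProduct_single, smul_eq_mul, smul_eq_mul, hp]
    simp only [mul_one]
    rw [show ω * (d k ^ t * (d k ^ (-t) * R u k * d k ^ (-(2*t)))) =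
        (d k ^ t * d k ^ (-t)) * (ω * (d k ^ (-(2*t)) * R u k)) by ring, hpow2 k, one_mul]
  rw [hdsq]
  simp only
  rw [expand, expand, hsym (p u) (q i), hsym (p u) (q j), hA, hA, hB, hB,
    Matrix.mulVec_sub, dotProduct_sub]
  ring
end

section
/- Under the signal-model setup, if user u has interacted with neither item i nor item j (R_{ui} = 0 and R_{uj} = 0), then (1/2)(d²_W(p_u, q_i) − d²_W(p_u, q_j)) = −(y_{ui} − y_{uj}); that is, half the residual of squared generalized Mahalanobis distances equals the negated preference residual. -/
open Matrix Finset

theorem signal_model_residual_uninteracted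
    (m n : ℕ) (R : Matrix (Fin m) (Fin n) ℝ)
    (hR01 : ∀ u i, R u i = 0 ∨ R u i = 1)
    (d : Fin n → ℝ) (hd : d = fun i => ∑ u, R u i) (hdpos : ∀ i, 0 < d i)
    (t : ℝ)
    (H : Matrix (Fin n) (Fin n) ℝ) (hHsymm : H.IsSymm) (hHhollow : ∀ i, H i i = 0)
    (ω : ℝ) (hω : 0 < ω)
    (W : Matrix (Fin n) (Fin n) ℝ)
    (hW : W = H + ω • Matrix.diagonal fun i => d i ^ (-(2 * t)))
    (p : Fin m → Fin n → ℝ) (hp : p = fun u k => d k ^ (-t) * R u k)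
    (q : Fin n → Fin n → ℝ) (hq : q = fun i => d i ^ t • (Pi.single i 1 : Fin n → ℝ))
    (dsq : (Fin n → ℝ) → (Fin n → ℝ) → ℝ)
    (hdsq : dsq = fun x z => (x - z) ⬝ᵥ W.mulVec (x - z))
    (y : Fin m → Fin n → ℝ) (hy : y = fun u i => p u ⬝ᵥ H.mulVec (q i))
    (u : Fin m) (i j : Fin n)

    (hui : R u i = 0) (huj : R u j = 0) :
    (1 / 2) * (dsq (p u) (q i) - dsq (p u) (q j)) = -(y u i - y u j) := by
  have hWsymm : Wᵀ = W := by
    simp [hW, Matrix.transpose_add, Matrix.transpose_smul, Matrix.diagonal_transpose, hHsymm.eq]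
  set v := p u with hv
  have hvi : v i = 0 := by rw [hv, hp]; simp [hui]
  have hvj : v j = 0 := by rw [hv, hp]; simp [huj]
  -- expansion of the quadratic form
  have expand : ∀ z : Fin n → ℝ, dsq v z
      = v ⬝ᵥ W *ᵥ v - 2 * (v ⬝ᵥ W *ᵥ z) + z ⬝ᵥ W *ᵥ z := by
    intro z
    have hsym : z ⬝ᵥ W *ᵥ v = v ⬝ᵥ W *ᵥ z := by
      rw [Matrix.dotProduct_mulVec, ← Matrix.vecMul_transpose, hWsymm]
      exact dotProduct_comm _ _
    rw [hdsq]
    simp only [Matrix.mulVec_sub, sub_dotProduct, dotProduct_sub]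
    rw [hsym]; ring
  -- cross term
  have cross : ∀ k : Fin n, v k = 0 → v ⬝ᵥ W *ᵥ q k = y u k := by
    intro k hk
    rw [hW, hy]
    show v ⬝ᵥ _ *ᵥ q k = v ⬝ᵥ H *ᵥ q k
    simp only [Matrix.add_mulVec, dotProduct_add, Matrix.smul_mulVec,
      dotProduct_smul]
    have : v ⬝ᵥ (Matrix.diagonal fun i => d i ^ (-(2 * t))) *ᵥ q k = 0 := by
      rw [hq]
      simp only [Matrix.mulVec_smul, Matrix.diagonal_mulVec_single, dotProduct_smul]
      simp [dotProduct_single, hk]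
    rw [this]
    simp
  -- diagonal term
  have diag : ∀ k : Fin n, q k ⬝ᵥ W *ᵥ q k = ω := by
    intro k
    rw [hq]
    simp only [Matrix.mulVec_smul, Matrix.mulVec_single, smul_dotProduct,
      dotProduct_smul, single_dotProduct, smul_eq_mul, one_mul, mul_one]
    rw [hW]
    simp only [MulOpposite.op_one, one_smul, Matrix.col_apply, Matrix.add_apply, Matrix.smul_apply, Matrix.diagonal_apply_eq, hHhollow,
      smul_eq_mul, zero_add]
    have h1 : d k ^ t * d k ^ t * d k ^ (-(2 * t)) = 1 := by
      rw [← Real.rpow_add (hdpos k), ← Real.rpow_add (hdpos k)]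
      rw [show t + t + -(2 * t) = 0 by ring, Real.rpow_zero]
    linear_combination ω * h1
  rw [expand (q i), expand (q j), cross i hvi, cross j hvj, diag i, diag j]
  ring
end

section
/- Under the signal-model setup, if user u has interacted with neither item i nor item j (R_{ui} = 0 and R_{uj} = 0), then d²_W(p_u, q_i) ≤ d²_W(p_u, q_j) if and only if y_{ui} ≥ y_{uj}; hence the ranking of the generalized Mahalanobis distances from the user to all uninteracted items is exactly the reverse ranking of their preference scores. -/
open Matrix Finset

theorem signal_model_ranking_uninteracted
    (m n : ℕ) (R : Matrix (Fin m) (Fin n) ℝ)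
    (hR01 : ∀ u i, R u i = 0 ∨ R u i = 1)
    (d : Fin n → ℝ) (hd : d = fun i => ∑ u, R u i) (hdpos : ∀ i, 0 < d i)
    (t : ℝ)
    (H : Matrix (Fin n) (Fin n) ℝ) (hHsymm : H.IsSymm) (hHhollow : ∀ i, H i i = 0)
    (ω : ℝ) (hω : 0 < ω)
    (W : Matrix (Fin n) (Fin n) ℝ)
    (hW : W = H + ω • Matrix.diagonal fun i => d i ^ (-(2 * t)))
    (p : Fin m → Fin n → ℝ) (hp : p = fun u k => d k ^ (-t) * R u k)
    (q : Fin n → Fin n → ℝ) (hq : q = fun i => d i ^ t • (Pi.single i 1 : Fin n → ℝ))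
    (dsq : (Fin n → ℝ) → (Fin n → ℝ) → ℝ)
    (hdsq : dsq = fun x z => (x - z) ⬝ᵥ W.mulVec (x - z))
    (y : Fin m → Fin n → ℝ) (hy : y = fun u i => p u ⬝ᵥ H.mulVec (q i))
    (u : Fin m) (i j : Fin n)

    (hui : R u i = 0) (huj : R u j = 0) :
    dsq (p u) (q i) ≤ dsq (p u) (q j) ↔ y u j ≤ y u i := by
  have hWsymm : Wᵀ = W := by
    rw [hW, Matrix.transpose_add, Matrix.transpose_smul, Matrix.diagonal_transpose, hHsymm]
  have key : ∀ k, R u k = 0 →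
      dsq (p u) (q k) = p u ⬝ᵥ W.mulVec (p u) - 2 * y u k + ω := by
    intro k hk
    have hpk : p u k = 0 := by simp [hp, hk]
    -- cross term
    have h1 : p u ⬝ᵥ W.mulVec (q k) = y u k := by
      rw [hW, hy]
      rw [Matrix.add_mulVec, dotProduct_add]
      have : p u ⬝ᵥ (ω • Matrix.diagonal fun i => d i ^ (-(2*t))).mulVec (q k) = 0 := by
        simp only [Matrix.smul_mulVec, dotProduct_smul, smul_eq_mul]
        have : (Matrix.diagonal fun i => d i ^ (-(2*t))).mulVec (q k)
            = fun x => d x ^ (-(2*t)) * q k x := by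
          funext x; simp [Matrix.mulVec_diagonal]
        rw [this]
        have hz : p u ⬝ᵥ (fun x => d x ^ (-(2*t)) * q k x) = 0 := by
          simp only [dotProduct, hq, Pi.smul_apply, Pi.single_apply, smul_eq_mul]
          rw [Finset.sum_eq_zero]
          intro x _
          by_cases hx : x = k
          · subst hx; simp [hpk]
          · simp [hx]
        rw [hz, mul_zero]
      rw [this, add_zero]
    have h2 : q k ⬝ᵥ W.mulVec (p u) = y u k := by
      rw [← h1, Matrix.dotProduct_mulVec, ← Matrix.mulVec_transpose, hWsymm,
        dotProduct_comm]
    have h3 : q k ⬝ᵥ W.mulVec (q k) = ω := by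
      rw [hW, Matrix.add_mulVec, dotProduct_add]
      have hH0 : q k ⬝ᵥ H.mulVec (q k) = 0 := by
        simp only [hq, dotProduct, Matrix.mulVec, Pi.smul_apply, Pi.single_apply,
          smul_eq_mul]
        rw [Finset.sum_eq_single k]
        · have : (∑ s, H k s * (d k ^ t * if s = k then 1 else 0)) = H k k * d k ^ t := by
            rw [Finset.sum_eq_single k]
            · simp
            · intro b _ hb; simp [hb]
            · intro hnot; exact absurd (Finset.mem_univ k) hnot
          rw [this, hHhollow]; ring
        · intro b _ hb; simp [hb]
        · intro hnot; exact absurd (Finset.mem_univ k) hnot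
      rw [hH0, zero_add]
      simp only [Matrix.smul_mulVec, dotProduct_smul, smul_eq_mul]
      have : (Matrix.diagonal fun i => d i ^ (-(2*t))).mulVec (q k)
          = fun x => d x ^ (-(2*t)) * q k x := by
        funext x; simp [Matrix.mulVec_diagonal]
      rw [this]
      have : q k ⬝ᵥ (fun x => d x ^ (-(2*t)) * q k x)
          = d k ^ t * (d k ^ (-(2*t)) * d k ^ t) := by
        simp only [dotProduct, hq, Pi.smul_apply, Pi.single_apply, smul_eq_mul]
        rw [Finset.sum_eq_single k]
        · simp
        · intro b _ hb; simp [hb]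
        · intro hnot; exact absurd (Finset.mem_univ k) hnot
      rw [this]
      have hd0 : d k ^ t * (d k ^ (-(2*t)) * d k ^ t) = 1 := by
        rw [← Real.rpow_add (hdpos k), ← Real.rpow_add (hdpos k)]
        have : t + (-(2*t) + t) = 0 := by ring
        rw [this, Real.rpow_zero]
      rw [hd0, mul_one]
    rw [hdsq]
    simp only [Matrix.mulVec_sub, sub_dotProduct, dotProduct_sub]
    rw [h1, h2, h3]
    ring
  rw [key i hui, key j huj]
  constructor <;> intro h <;> linarith
end

section
/- Under the signal-model setup, if user u has interacted with item i but not with item j (R_{ui} = 1 and R_{uj} = 0), then (1/2)(d²_W(p_u, q_i) − d²_W(p_u, q_j)) = −(y_{ui} − y_{uj}) − ω d_i^{−2t}. -/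
open Matrix Finset

theorem signal_model_residual_interacted_uninteracted
    (m n : ℕ) (R : Matrix (Fin m) (Fin n) ℝ)
    (hR01 : ∀ u i, R u i = 0 ∨ R u i = 1)
    (d : Fin n → ℝ) (hd : d = fun i => ∑ u, R u i) (hdpos : ∀ i, 0 < d i)
    (t : ℝ)
    (H : Matrix (Fin n) (Fin n) ℝ) (hHsymm : H.IsSymm) (hHhollow : ∀ i, H i i = 0)
    (ω : ℝ) (hω : 0 < ω)
    (W : Matrix (Fin n) (Fin n) ℝ)
    (hW : W = H + ω • Matrix.diagonal fun i => d i ^ (-(2 * t)))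
    (p : Fin m → Fin n → ℝ) (hp : p = fun u k => d k ^ (-t) * R u k)
    (q : Fin n → Fin n → ℝ) (hq : q = fun i => d i ^ t • (Pi.single i 1 : Fin n → ℝ))
    (dsq : (Fin n → ℝ) → (Fin n → ℝ) → ℝ)
    (hdsq : dsq = fun x z => (x - z) ⬝ᵥ W.mulVec (x - z))
    (y : Fin m → Fin n → ℝ) (hy : y = fun u i => p u ⬝ᵥ H.mulVec (q i))
    (u : Fin m) (i j : Fin n)

    (hui : R u i = 1) (huj : R u j = 0) :
    (1 / 2) * (dsq (p u) (q i) - dsq (p u) (q j)) =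
      -(y u i - y u j) - ω * d i ^ (-(2 * t)) := by
  -- W is symmetric
  have hWsymm : Wᵀ = W := by
    rw [hW, Matrix.transpose_add, Matrix.transpose_smul, Matrix.diagonal_transpose, hHsymm]
  have hswap : ∀ x z : Fin n → ℝ, x ⬝ᵥ W *ᵥ z = z ⬝ᵥ W *ᵥ x := by
    intro x z
    rw [Matrix.dotProduct_mulVec, ← Matrix.mulVec_transpose, hWsymm, dotProduct_comm]
  -- rpow facts
  have hcancel : ∀ k : Fin n, d k ^ t * (d k ^ t * d k ^ (-(2 * t))) = 1 := by
    intro k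
    rw [← Real.rpow_add (hdpos k), ← Real.rpow_add (hdpos k),
      show t + (t + -(2 * t)) = 0 by ring, Real.rpow_zero]
  have hcancel2 : ∀ k : Fin n, d k ^ (-t) * d k ^ t = 1 := by
    intro k
    rw [← Real.rpow_add (hdpos k), show -t + t = 0 by ring, Real.rpow_zero]
  -- generic computation of x ⬝ᵥ W *ᵥ q k
  have hBq : ∀ (x : Fin n → ℝ) (k : Fin n),
      x ⬝ᵥ W *ᵥ (q k) = x ⬝ᵥ H *ᵥ (q k) + ω * (d k ^ (-(2 * t)) * (d k ^ t * x k)) := by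
    intro x k
    rw [hW, hq]
    simp only [dotProduct, Matrix.mulVec, Matrix.add_apply, Matrix.smul_apply,
      Matrix.diagonal_apply, Pi.smul_apply, Pi.single_apply, smul_eq_mul, mul_ite, ite_mul,
      mul_zero, zero_mul, mul_one, Finset.sum_ite_eq, Finset.mem_univ, if_true, mul_add,
      add_mul, Finset.sum_add_distrib]
    simp only [Finset.sum_ite_eq', Finset.mem_univ, if_true, mul_add, mul_ite, mul_zero,
      Finset.sum_add_distrib, Finset.sum_ite_eq]
    ring
  -- quadratic terms in q
  have hqq : ∀ k : Fin n, (q k) ⬝ᵥ W *ᵥ (q k) = ω := by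
    intro k
    rw [hBq]
    have h1 : q k ⬝ᵥ H *ᵥ q k = 0 := by
      rw [hq]
      simp [Matrix.mulVec_smul, Matrix.mulVec_single, smul_dotProduct,
        single_dotProduct, hHhollow]
    have h2 : q k k = d k ^ t := by
      rw [hq]; simp
    rw [h1, h2, zero_add,
      show ω * (d k ^ (-(2 * t)) * (d k ^ t * d k ^ t)) =
        ω * (d k ^ t * (d k ^ t * d k ^ (-(2 * t)))) by ring, hcancel k, mul_one]
  -- cross terms
  have hcross : ∀ k : Fin n, (p u) ⬝ᵥ W *ᵥ (q k) = y u k + ω * (d k ^ (-(2 * t)) * R u k) := by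
    intro k
    rw [hBq, hy]
    have : p u k = d k ^ (-t) * R u k := by rw [hp]
    rw [this]
    have : d k ^ t * (d k ^ (-t) * R u k) = R u k := by
      rw [← mul_assoc, mul_comm (d k ^ t), hcancel2 k, one_mul]
    rw [this]
  -- expansion of dsq
  have hexp : ∀ k : Fin n, dsq (p u) (q k) =
      (p u) ⬝ᵥ W *ᵥ (p u) - 2 * ((p u) ⬝ᵥ W *ᵥ (q k)) + ω := by
    intro k
    rw [hdsq]
    simp only [Matrix.mulVec_sub, dotProduct_sub, sub_dotProduct]
    rw [hswap (q k) (p u), hqq k]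
    ring
  rw [hexp i, hexp j, hcross i, hcross j, hui, huj]
  ring
end

section
/- Under the signal-model setup, if user u has interacted with both item i and item j (R_{ui} = 1 and R_{uj} = 1), then (1/2)(d²_W(p_u, q_i) − d²_W(p_u, q_j)) = −(y_{ui} − y_{uj}) − ω (d_i^{−2t} − d_j^{−2t}); in particular, when t = 0 this bias term vanishes and half the distance residual equals the negated preference residual. -/
open Matrix Finset

/-!
Since `W` is symmetric, `d²_W(p, q) = pᵀWp - 2 pᵀWq + qᵀWq`, and the term `pᵀWp` cancels in the
residual. For `q_k = d_k^t e_k` the self term is `d_k^{2t} (H_kk + ω d_k^{-2t}) = ω` because `H` is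
hollow, so it cancels as well. The cross term is `pᵀWq_k = y_uk + ω d_k^{-t} (p_u)_k`, and
`(p_u)_k = d_k^{-t}` when the user interacted with `k`.
-/

theorem Matrix.IsSymm.sub_dotProduct_mulVec_sub {ι R : Type*} [Fintype ι] [CommRing R]
    {W : Matrix ι ι R} (hW : W.IsSymm) (x z : ι → R) :
    (x - z) ⬝ᵥ W *ᵥ (x - z) = x ⬝ᵥ W *ᵥ x - 2 * (x ⬝ᵥ W *ᵥ z) + z ⬝ᵥ W *ᵥ z := by
  have hzx : z ⬝ᵥ W *ᵥ x = x ⬝ᵥ W *ᵥ z := by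
    rw [dotProduct_mulVec, ← mulVec_transpose, hW.eq, dotProduct_comm]
  simp only [mulVec_sub, dotProduct_sub, sub_dotProduct, hzx]
  ring

section

variable {ι R : Type*} [Fintype ι] [DecidableEq ι] [CommSemiring R]

theorem Matrix.single_dotProduct_mulVec_single (A : Matrix ι ι R) (i j : ι) (a b : R) :
    Pi.single i a ⬝ᵥ A *ᵥ Pi.single j b = a * A i j * b := by
  simp [mul_comm]

theorem Matrix.dotProduct_add_smul_diagonal_mulVec_single (H : Matrix ι ι R) (ω : R)
    (D x : ι → R) (k : ι) (c : R) :
    x ⬝ᵥ (H + ω • diagonal D) *ᵥ Pi.single k c =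
      x ⬝ᵥ H *ᵥ Pi.single k c + ω * (x k * D k * c) := by
  simp only [add_mulVec, smul_mulVec, diagonal_mulVec_single, dotProduct_add, dotProduct_smul,
    dotProduct_single, smul_eq_mul, mul_assoc]

end

theorem signal_model_residual_both_interacted_general
    (m n : ℕ) (R : Matrix (Fin m) (Fin n) ℝ)
    (d : Fin n → ℝ) (hdpos : ∀ i, 0 < d i)
    (t : ℝ)
    (H : Matrix (Fin n) (Fin n) ℝ) (hHsymm : H.IsSymm) (hHhollow : ∀ i, H i i = 0)
    (ω : ℝ)
    (W : Matrix (Fin n) (Fin n) ℝ)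
    (hW : W = H + ω • Matrix.diagonal fun i => d i ^ (-(2 * t)))
    (p : Fin m → Fin n → ℝ) (hp : p = fun u k => d k ^ (-t) * R u k)
    (q : Fin n → Fin n → ℝ) (hq : q = fun i => d i ^ t • (Pi.single i 1 : Fin n → ℝ))
    (dsq : (Fin n → ℝ) → (Fin n → ℝ) → ℝ)
    (hdsq : dsq = fun x z => (x - z) ⬝ᵥ W.mulVec (x - z))
    (y : Fin m → Fin n → ℝ) (hy : y = fun u i => p u ⬝ᵥ H.mulVec (q i))
    (u : Fin m) (i j : Fin n)

    (hui : R u i = 1) (huj : R u j = 1) :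
    (1 / 2) * (dsq (p u) (q i) - dsq (p u) (q j)) =
      -(y u i - y u j) - ω * (d i ^ (-(2 * t)) - d j ^ (-(2 * t))) ∧
    (t = 0 → (1 / 2) * (dsq (p u) (q i) - dsq (p u) (q j)) = -(y u i - y u j)) := by
  have hWsymm : W.IsSymm := hW ▸ hHsymm.add ((isSymm_diagonal _).smul ω)
  have hq_single : ∀ k, q k = Pi.single k (d k ^ t) := fun k => by
    simp only [hq, ← Pi.single_smul', smul_eq_mul, mul_one]
  have hp_interacted : ∀ k, R u k = 1 → p u k = d k ^ (-t) := fun k hk => by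
    simp only [hp, hk, mul_one]
  have cross : ∀ k, R u k = 1 →
      p u ⬝ᵥ W *ᵥ q k = p u ⬝ᵥ H *ᵥ q k + ω * d k ^ (-(2 * t)) := fun k hk => by
    rw [hW, hq_single, dotProduct_add_smul_diagonal_mulVec_single, hp_interacted k hk,
      ← Real.rpow_add (hdpos k), ← Real.rpow_add (hdpos k),
      show -t + -(2 * t) + t = -(2 * t) by ring]
  have self : ∀ k, q k ⬝ᵥ W *ᵥ q k = ω := fun k => by
    rw [hW, hq_single, dotProduct_add_smul_diagonal_mulVec_single,
      single_dotProduct_mulVec_single, hHhollow, Pi.single_eq_same, ← Real.rpow_add (hdpos k),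
      ← Real.rpow_add (hdpos k), show t + -(2 * t) + t = 0 by ring, Real.rpow_zero]
    ring
  have residual : (1 / 2) * (dsq (p u) (q i) - dsq (p u) (q j)) =
      -(y u i - y u j) - ω * (d i ^ (-(2 * t)) - d j ^ (-(2 * t))) := by
    simp only [hdsq, hy, hWsymm.sub_dotProduct_mulVec_sub, cross i hui, cross j huj, self]
    ring
  exact ⟨residual, fun ht => by simpa [ht] using residual⟩

theorem signal_model_residual_both_interacted
    (m n : ℕ) (R : Matrix (Fin m) (Fin n) ℝ)
    (hR01 : ∀ u i, R u i = 0 ∨ R u i = 1)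
    (d : Fin n → ℝ) (hd : d = fun i => ∑ u, R u i) (hdpos : ∀ i, 0 < d i)
    (t : ℝ)
    (H : Matrix (Fin n) (Fin n) ℝ) (hHsymm : H.IsSymm) (hHhollow : ∀ i, H i i = 0)
    (ω : ℝ) (hω : 0 < ω)
    (W : Matrix (Fin n) (Fin n) ℝ)
    (hW : W = H + ω • Matrix.diagonal fun i => d i ^ (-(2 * t)))
    (p : Fin m → Fin n → ℝ) (hp : p = fun u k => d k ^ (-t) * R u k)
    (q : Fin n → Fin n → ℝ) (hq : q = fun i => d i ^ t • (Pi.single i 1 : Fin n → ℝ))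
    (dsq : (Fin n → ℝ) → (Fin n → ℝ) → ℝ)
    (hdsq : dsq = fun x z => (x - z) ⬝ᵥ W.mulVec (x - z))
    (y : Fin m → Fin n → ℝ) (hy : y = fun u i => p u ⬝ᵥ H.mulVec (q i))
    (u : Fin m) (i j : Fin n)

    (hui : R u i = 1) (huj : R u j = 1) :
    (1 / 2) * (dsq (p u) (q i) - dsq (p u) (q j)) =
      -(y u i - y u j) - ω * (d i ^ (-(2 * t)) - d j ^ (-(2 * t))) ∧
    (t = 0 → (1 / 2) * (dsq (p u) (q i) - dsq (p u) (q j)) = -(y u i - y u j)) :=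
  signal_model_residual_both_interacted_general m n R d hdpos t H hHsymm hHhollow ω W hW p hp q hq
    dsq hdsq y hy u i j hui huj
end

section
/- Under the signal-model setup with t = 0, if user u has interacted with item i but not with item j (R_{ui} = 1 and R_{uj} = 0), and the preference scores attain the linear-autoencoder targets y_{ui} = 1 and y_{uj} = 0, then d²_W(p_u, q_j) − d²_W(p_u, q_i) = 2 + 2ω. -/
open Matrix Finset

private lemma symm_dot {n : ℕ} (M : Matrix (Fin n) (Fin n) ℝ) (hM : M.IsSymm)
    (x e : Fin n → ℝ) : e ⬝ᵥ M.mulVec x = x ⬝ᵥ M.mulVec e := by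
  rw [Matrix.dotProduct_mulVec]
  conv_lhs => rw [← hM]
  rw [Matrix.vecMul_transpose, dotProduct_comm]

private lemma expand_quad {n : ℕ} (M : Matrix (Fin n) (Fin n) ℝ) (hM : M.IsSymm)
    (x e : Fin n → ℝ) :
    (x - e) ⬝ᵥ M.mulVec (x - e)
      = x ⬝ᵥ M.mulVec x - 2 * (x ⬝ᵥ M.mulVec e) + e ⬝ᵥ M.mulVec e := by
  simp only [Matrix.mulVec_sub, sub_dotProduct, dotProduct_sub,
    symm_dot M hM x e]
  ring

theorem signal_model_autoencoder_margin
    (m n : ℕ) (R : Matrix (Fin m) (Fin n) ℝ)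
    (hR01 : ∀ u i, R u i = 0 ∨ R u i = 1)
    (d : Fin n → ℝ) (hd : d = fun i => ∑ u, R u i) (hdpos : ∀ i, 0 < d i)
    (t : ℝ)
    (H : Matrix (Fin n) (Fin n) ℝ) (hHsymm : H.IsSymm) (hHhollow : ∀ i, H i i = 0)
    (ω : ℝ) (hω : 0 < ω)
    (W : Matrix (Fin n) (Fin n) ℝ)
    (hW : W = H + ω • Matrix.diagonal fun i => d i ^ (-(2 * t)))
    (p : Fin m → Fin n → ℝ) (hp : p = fun u k => d k ^ (-t) * R u k)
    (q : Fin n → Fin n → ℝ) (hq : q = fun i => d i ^ t • (Pi.single i 1 : Fin n → ℝ))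
    (dsq : (Fin n → ℝ) → (Fin n → ℝ) → ℝ)
    (hdsq : dsq = fun x z => (x - z) ⬝ᵥ W.mulVec (x - z))
    (y : Fin m → Fin n → ℝ) (hy : y = fun u i => p u ⬝ᵥ H.mulVec (q i))
    (u : Fin m) (i j : Fin n)

    (ht : t = 0) (hui : R u i = 1) (huj : R u j = 0)
    (hyi : y u i = 1) (hyj : y u j = 0) :
    dsq (p u) (q j) - dsq (p u) (q i) = 2 + 2 * ω := by
  subst ht hW hp hq hdsq hy
  simp only [Real.rpow_zero, neg_zero, mul_zero, one_mul, one_smul] at *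
  have hWsymm : (H + ω • Matrix.diagonal fun _ : Fin n => (1:ℝ)).IsSymm := by
    rw [Matrix.IsSymm, Matrix.transpose_add, Matrix.transpose_smul,
      Matrix.diagonal_transpose, hHsymm]
  rw [expand_quad _ hWsymm, expand_quad _ hWsymm]
  have hx : ∀ k : Fin n,
      (fun k => R u k) ⬝ᵥ (H + ω • Matrix.diagonal fun _ : Fin n => (1:ℝ)) *ᵥ Pi.single k 1
        = (fun k => R u k) ⬝ᵥ H *ᵥ Pi.single k 1 + ω * R u k := by
    intro k
    rw [Matrix.add_mulVec, dotProduct_add, Matrix.smul_mulVec,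
      Matrix.diagonal_one, Matrix.one_mulVec, dotProduct_smul,
      dotProduct_single]
    simp
  have he : ∀ k : Fin n,
      Pi.single k (1:ℝ) ⬝ᵥ (H + ω • Matrix.diagonal fun _ : Fin n => (1:ℝ)) *ᵥ Pi.single k 1
        = ω := by
    intro k
    rw [Matrix.add_mulVec, dotProduct_add, Matrix.smul_mulVec,
      Matrix.diagonal_one, Matrix.one_mulVec, dotProduct_smul,
      dotProduct_single, Matrix.mulVec_single, single_dotProduct]
    simp [hHhollow k]
  rw [hx i, hx j, he i, he j, hyi, hyj, hui, huj]
  ring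
end
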